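/- For the reaction model z(t,x,ξ) = f(x)·e^{−t·ψ(ξ)} with f ∈ L²((0,1)ⁿ) non-constant, ψ measurable with e^{−tψ} ∈ L²((0,1)ᵐ), and any fixed t ≥ 0, the total Sobol index of each macro-model input x_i satisfies S^z_{T,x_i} ≤ S^f_{T,x_i}, uniformly in t. -/

import Mathlib

open MeasureTheory

noncomputable section SobolDefs

/-- Uniform probability measure on the open unit cube `(0,1)^n`. -/
def uCube (n : ℕ) : Measure (Fin n → ℝ) :=
  Measure.pi fun _ => volume.restrict (Set.Ioo 0 1)

/-- Mean value of `f`. -/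
def mval {α : Type*} [MeasurableSpace α] (μ : Measure α) (f : α → ℝ) : ℝ := ∫ x, f x ∂μ

/-- Integral of the square of `f`. -/
def intSq {α : Type*} [MeasurableSpace α] (μ : Measure α) (f : α → ℝ) : ℝ := ∫ x, (f x) ^ 2 ∂μ

/-- Variance of `f`. -/
def var' {α : Type*} [MeasurableSpace α] (μ : Measure α) (f : α → ℝ) : ℝ := intSq μ f - (mval μ f) ^ 2

/-- Covariance of `f` and `h`. -/
def cov' {α : Type*} [MeasurableSpace α] (μ : Measure α) (f h : α → ℝ) : ℝ :=
  (∫ x, f x * h x ∂μ) - mval μ f * mval μ h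

/-- Conditional mean of `f` obtained by integrating out the coordinate encoded
by the update map `upd` over `(0,1)`. -/
def cMean {α : Type*} [MeasurableSpace α] (upd : α → ℝ → α) (f : α → ℝ) (x : α) : ℝ :=
  ∫ t in Set.Ioo (0 : ℝ) 1, f (upd x t)

/-- Total-effect variance of the coordinate encoded by `upd`. -/
def tVar {α : Type*} [MeasurableSpace α] (μ : Measure α) (upd : α → ℝ → α) (f : α → ℝ) : ℝ :=
  intSq μ f - ∫ x, (cMean upd f x) ^ 2 ∂μ

/-- Total Sobol sensitivity index of the coordinate encoded by `upd`. -/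
def sobolT {α : Type*} [MeasurableSpace α] (μ : Measure α) (upd : α → ℝ → α) (f : α → ℝ) : ℝ :=
  tVar μ upd f / var' μ f

/-- Updating the `i`-th coordinate of a point of the cube. -/
def updC {n : ℕ} (i : Fin n) : (Fin n → ℝ) → ℝ → (Fin n → ℝ) :=
  fun x t => Function.update x i t

/-- Updating the `i`-th coordinate of the first component of a product point. -/
def updF {n : ℕ} {β : Type*} (i : Fin n) : ((Fin n → ℝ) × β) → ℝ → ((Fin n → ℝ) × β) :=
  fun p t => (Function.update p.1 i t, p.2)

end SobolDefs

/-!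
For `z = f ⊗ g` every quantity in the Sobol index factorizes: with `A = ∫ f²`, `a = ∫ f`,
`B = ∫ g²`, `b = ∫ g` and `T` the total-effect variance of `f`, one gets
`S^z = T B / (A B - a² b²)` and `S^f = T / (A - a²)`. Cross-multiplying, `S^z ≤ S^f` reduces to
`T a² (b² - B) ≤ 0`, which holds since `b² ≤ B` (the variance of `g` is nonnegative) and
`T ≥ 0`. The latter is Jensen's inequality on each slice `t ↦ f (update x i t)` followed by
Fubini, using that updating one coordinate with an independent uniform variable preserves the
cube measure.
-/

open Set Function

instance : IsProbabilityMeasure ((volume : Measure ℝ).restrict (Ioo (0 : ℝ) 1)) :=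
  ⟨by simp [Real.volume_Ioo]⟩

instance (n : ℕ) : IsProbabilityMeasure (uCube n) := by
  unfold uCube; infer_instance

theorem measurePreserving_update {ι : Type*} [Fintype ι] [DecidableEq ι] {X : ι → Type*}
    [∀ j, MeasurableSpace (X j)] (μ : ∀ j, Measure (X j)) [∀ j, SigmaFinite (μ j)] (i : ι)
    [IsProbabilityMeasure (μ i)] :
    MeasurePreserving (fun p : (∀ j, X j) × X i => update p.1 i p.2)
      ((Measure.pi μ).prod (μ i)) (Measure.pi μ) := by
  refine ⟨measurable_update', (Measure.pi_eq fun s hs => ?_).symm⟩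
  have hpre : (fun p : (∀ j, X j) × X i => update p.1 i p.2) ⁻¹' univ.pi s
      = univ.pi (update s i univ) ×ˢ s i := by
    ext ⟨x, t⟩
    simp only [mem_preimage, mem_prod, mem_univ_pi]
    rw [forall_update_iff x (fun j y => y ∈ s j), forall_update_iff s (fun j S => x j ∈ S)]
    simp [and_comm]
  rw [Measure.map_apply measurable_update' (.univ_pi hs), hpre, Measure.prod_prod,
    Measure.pi_pi]
  simp_rw [apply_update (fun j => μ j)]
  rw [Finset.prod_update_of_mem (Finset.mem_univ i), measure_univ, one_mul,
    Finset.prod_eq_prod_sdiff_singleton_mul (Finset.mem_univ i)]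

theorem var'_nonneg {α : Type*} [MeasurableSpace α] {μ : Measure α} [IsProbabilityMeasure μ]
    {g : α → ℝ} (hg : MemLp g 2 μ) : 0 ≤ var' μ g := by
  have h := ProbabilityTheory.variance_nonneg g μ
  rwa [ProbabilityTheory.variance_eq_sub hg] at h

section TotalVariance

variable {α : Type*} [MeasurableSpace α] {μ : Measure α} [SFinite μ] {upd : α → ℝ → α}

theorem integral_cMean_sq_le_intSq
    (hupd : MeasurePreserving (uncurry upd) (μ.prod (volume.restrict (Ioo 0 1))) μ)
    {f : α → ℝ} (hf : MemLp f 2 μ) : ∫ x, cMean upd f x ^ 2 ∂μ ≤ intSq μ f := by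
  set ν : Measure ℝ := volume.restrict (Ioo 0 1)
  have hF : MemLp (f ∘ uncurry upd) 2 (μ.prod ν) := hf.comp_measurePreserving hupd
  have hF2 : Integrable (fun p => f (uncurry upd p) ^ 2) (μ.prod ν) := hF.integrable_sq
  have hslice : ∀ᵐ x ∂μ, MemLp (fun t => f (upd x t)) 2 ν := by
    filter_upwards [hF2.prod_right_ae, hF.aestronglyMeasurable.prodMk_left] with x h2 hm
    exact (memLp_two_iff_integrable_sq hm).2 h2
  have hjensen : ∀ᵐ x ∂μ, cMean upd f x ^ 2 ≤ ∫ t, f (upd x t) ^ 2 ∂ν := by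
    filter_upwards [hslice] with x hx
    exact sub_nonneg.1 (var'_nonneg hx)
  have hbound : Integrable (fun x => ∫ t, f (upd x t) ^ 2 ∂ν) μ := hF2.integral_prod_left
  have hcMean : Integrable (fun x => cMean upd f x ^ 2) μ := by
    refine hbound.mono' (hF.aestronglyMeasurable.integral_prod_right'.pow 2) ?_
    filter_upwards [hjensen] with x hx
    rwa [Real.norm_eq_abs, abs_of_nonneg (sq_nonneg _)]
  calc ∫ x, cMean upd f x ^ 2 ∂μ
      ≤ ∫ x, ∫ t, f (upd x t) ^ 2 ∂ν ∂μ := integral_mono_ae hcMean hbound hjensen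
    _ = ∫ p, f (uncurry upd p) ^ 2 ∂(μ.prod ν) := integral_integral hF2
    _ = intSq μ f := by
      have hsq : AEStronglyMeasurable (fun x => f x ^ 2) ((μ.prod ν).map (uncurry upd)) := by
        rw [hupd.map_eq]; exact hf.integrable_sq.aestronglyMeasurable
      rw [← integral_map hupd.aemeasurable hsq, hupd.map_eq, intSq]

theorem tVar_nonneg
    (hupd : MeasurePreserving (uncurry upd) (μ.prod (volume.restrict (Ioo 0 1))) μ)
    {f : α → ℝ} (hf : MemLp f 2 μ) : 0 ≤ tVar μ upd f :=
  sub_nonneg.2 (integral_cMean_sq_le_intSq hupd hf)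

end TotalVariance

theorem measurePreserving_uncurry_updC {n : ℕ} (i : Fin n) :
    MeasurePreserving (uncurry (updC i)) ((uCube n).prod (volume.restrict (Ioo 0 1))) (uCube n) :=
  measurePreserving_update (fun _ => volume.restrict (Ioo 0 1)) i

section ProductForm

variable {α β : Type*} [MeasurableSpace α] [MeasurableSpace β]
  {μ : Measure α} {ν : Measure β} [SigmaFinite μ] [SigmaFinite ν]

theorem mval_prod_mul (f : α → ℝ) (g : β → ℝ) :
    mval (μ.prod ν) (fun p => f p.1 * g p.2) = mval μ f * mval ν g :=
  integral_prod_mul f g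

theorem intSq_prod_mul (f : α → ℝ) (g : β → ℝ) :
    intSq (μ.prod ν) (fun p => f p.1 * g p.2) = intSq μ f * intSq ν g := by
  simp_rw [intSq, mul_pow]
  exact integral_prod_mul (fun x => f x ^ 2) (fun y => g y ^ 2)

theorem var'_prod_mul (f : α → ℝ) (g : β → ℝ) :
    var' (μ.prod ν) (fun p => f p.1 * g p.2) =
      intSq μ f * intSq ν g - (mval μ f * mval ν g) ^ 2 := by
  rw [var', intSq_prod_mul, mval_prod_mul]

end ProductForm

theorem cMean_updF_mul {n : ℕ} {β : Type*} [MeasurableSpace β] (i : Fin n)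
    (f : (Fin n → ℝ) → ℝ) (g : β → ℝ) (p : (Fin n → ℝ) × β) :
    cMean (updF i) (fun p => f p.1 * g p.2) p = cMean (updC i) f p.1 * g p.2 :=
  integral_mul_const (g p.2) _

theorem tVar_updF_mul {n : ℕ} {β : Type*} [MeasurableSpace β] {μ : Measure (Fin n → ℝ)}
    {ν : Measure β} [SigmaFinite μ] [SigmaFinite ν] (i : Fin n)
    (f : (Fin n → ℝ) → ℝ) (g : β → ℝ) :
    tVar (μ.prod ν) (updF i) (fun p => f p.1 * g p.2) = tVar μ (updC i) f * intSq ν g := by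
  simp_rw [tVar, intSq_prod_mul, cMean_updF_mul, mul_pow]
  rw [integral_prod_mul (fun x => cMean (updC i) f x ^ 2) (fun y => g y ^ 2), sub_mul]
  rfl

theorem sobolT_updF_mul_le {n : ℕ} {β : Type*} [MeasurableSpace β] {ν : Measure β}
    [IsProbabilityMeasure ν] (i : Fin n) {f : (Fin n → ℝ) → ℝ} {g : β → ℝ}
    (hf : MemLp f 2 (uCube n)) (hg : MemLp g 2 ν) (hvf : 0 < var' (uCube n) f)
    (hvz : 0 < var' ((uCube n).prod ν) (fun p => f p.1 * g p.2)) :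
    sobolT ((uCube n).prod ν) (updF i) (fun p => f p.1 * g p.2) ≤
      sobolT (uCube n) (updC i) f := by
  have hT := tVar_nonneg (measurePreserving_uncurry_updC i) hf
  have hg' := var'_nonneg hg
  rw [var'_prod_mul] at hvz
  rw [sobolT, sobolT, tVar_updF_mul, var'_prod_mul, div_le_div_iff₀ hvz hvf]
  rw [var'] at hvf hg' ⊢
  nlinarith [mul_nonneg (mul_nonneg hT (sq_nonneg (mval (uCube n) f))) hg']

theorem stmt17_general {n m : ℕ} (i : Fin n) (f : (Fin n → ℝ) → ℝ) (ψ : (Fin m → ℝ) → ℝ)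
    (hf : MemLp f 2 (uCube n))
    (hvf : 0 < var' (uCube n) f) :
    ∀ t : ℝ, 0 ≤ t →
      MemLp (fun ξ => Real.exp (-t * ψ ξ)) 2 (uCube m) →
      0 < var' ((uCube n).prod (uCube m))
        (fun p => f p.1 * Real.exp (-t * ψ p.2)) →
      sobolT ((uCube n).prod (uCube m)) (updF i)
          (fun p => f p.1 * Real.exp (-t * ψ p.2)) ≤
        sobolT (uCube n) (updC i) f :=
  fun _ _ hexp hvz => sobolT_updF_mul_le i hf hexp hvf hvz

/-- Reaction model: for `z(t,x,ξ) = f(x)·exp(−t·ψ(ξ))` with non-constant `f` and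
any fixed `t ≥ 0`, the total Sobol index of each macro input `x_i` satisfies
`S^z_{T,x_i} ≤ S^f_{T,x_i}`. -/
theorem stmt17 {n m : ℕ} (i : Fin n) (f : (Fin n → ℝ) → ℝ) (ψ : (Fin m → ℝ) → ℝ)
    (hf : MemLp f 2 (uCube n)) (hψ : Measurable ψ)
    (hvf : 0 < var' (uCube n) f) :
    ∀ t : ℝ, 0 ≤ t →
      MemLp (fun ξ => Real.exp (-t * ψ ξ)) 2 (uCube m) →
      0 < var' ((uCube n).prod (uCube m))
        (fun p => f p.1 * Real.exp (-t * ψ p.2)) →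
      sobolT ((uCube n).prod (uCube m)) (updF i)
          (fun p => f p.1 * Real.exp (-t * ψ p.2)) ≤
        sobolT (uCube n) (updC i) f :=
  stmt17_general i f ψ hf hvf
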